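/- arXiv:2605.08023 — 2 statements merged into one kernel-verified Lean document; each statement's English description precedes it below -/
import Mathlib

section
/- For complex numbers z₀, …, z_p with |z₀| ≤ |z₁| ≤ ⋯ ≤ |z_p|, one has ∑_{j=0}^{p} ∏_{i ≠ j} |z_i|² ≥ |z₁|^{2p} + |z₀|^{2p} ≥ 2^{1−p} (|z₀|² + |z₁|²)^p, provided all |z_i| ≤ 1. -/
/-- Two-term power mean inequality. -/
lemma aux_add_pow_le (a b : ℝ) (ha : 0 ≤ a) (hb : 0 ≤ b) (p : ℕ) (hp : 1 ≤ p) :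
    (2 : ℝ) ^ ((1 : ℤ) - (p : ℤ)) * (a + b) ^ p ≤ a ^ p + b ^ p := by
  have h := Real.pow_arith_mean_le_arith_mean_pow (Finset.univ : Finset (Fin 2))
    ![1/2, 1/2] ![a, b] (by intro i _; fin_cases i <;> norm_num)
    (by simp [Fin.sum_univ_succ]; norm_num)
    (by intro i _; fin_cases i <;> simpa) p
  simp only [Fin.sum_univ_succ, Fin.sum_univ_zero, Matrix.cons_val_zero,
    Fin.succ_zero_eq_one, Matrix.cons_val_one, Matrix.head_cons] at h
  have h2 : ((a + b) / 2) ^ p ≤ (a ^ p + b ^ p) / 2 := by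
    rw [show (a + b) / 2 = 1/2 * a + (1/2 * b + 0) by ring,
      show (a ^ p + b ^ p) / 2 = 1/2 * a ^ p + (1/2 * b ^ p + 0) by ring]
    exact h
  have hpow : (0 : ℝ) < (2 : ℝ) ^ (p : ℕ) := by positivity
  have hz : (2 : ℝ) ^ ((1 : ℤ) - (p : ℤ)) = 2 * ((2 : ℝ) ^ (p : ℕ))⁻¹ := by
    rw [zpow_sub₀ (by norm_num : (2:ℝ) ≠ 0), zpow_one, zpow_natCast, div_eq_mul_inv]
  rw [hz]
  have := mul_le_mul_of_nonneg_left h2 (by positivity : (0:ℝ) ≤ 2 * ((2:ℝ)^(p:ℕ))⁻¹ * 2 ^ p)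
  calc 2 * ((2 : ℝ) ^ (p : ℕ))⁻¹ * (a + b) ^ p
      = 2 * ((2:ℝ)^(p:ℕ))⁻¹ * 2 ^ p * ((a + b) / 2) ^ p := by
        rw [div_pow]; field_simp
    _ ≤ 2 * ((2:ℝ)^(p:ℕ))⁻¹ * 2 ^ p * ((a ^ p + b ^ p) / 2) := this
    _ = a ^ p + b ^ p := by field_simp

/-- For complex numbers `z₀, …, z_p` (p ≥ 1) with `|z₀| ≤ |z₁| ≤ ⋯ ≤ |z_p| ≤ 1`:
`∑_{j} ∏_{i ≠ j} |z_i|² ≥ |z₁|^{2p} + |z₀|^{2p} ≥ 2^{1−p} (|z₀|² + |z₁|²)^p`. -/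
theorem stmt_3 (p : ℕ) (hp : 1 ≤ p) (z : Fin (p + 1) → ℂ)
    (hmono : ∀ i j : Fin (p + 1), i ≤ j → ‖z i‖ ≤ ‖z j‖)
    (hle1 : ∀ i : Fin (p + 1), ‖z i‖ ≤ 1) :
    (2 : ℝ) ^ ((1 : ℤ) - (p : ℤ)) *
        (‖z ⟨0, by omega⟩‖ ^ 2 + ‖z ⟨1, by omega⟩‖ ^ 2) ^ p
      ≤ ‖z ⟨1, by omega⟩‖ ^ (2 * p) + ‖z ⟨0, by omega⟩‖ ^ (2 * p) ∧
    ‖z ⟨1, by omega⟩‖ ^ (2 * p) + ‖z ⟨0, by omega⟩‖ ^ (2 * p)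
      ≤ ∑ j : Fin (p + 1), ∏ i ∈ Finset.univ.erase j, ‖z i‖ ^ 2 := by
  set i0 : Fin (p + 1) := ⟨0, by omega⟩
  set i1 : Fin (p + 1) := ⟨1, by omega⟩
  have h01 : i0 ≠ i1 := by simp [i0, i1, Fin.ext_iff]
  have card_erase : ∀ j : Fin (p + 1), (Finset.univ.erase j).card = p := by
    intro j; rw [Finset.card_erase_of_mem (Finset.mem_univ _)]; simp
  constructor
  · have := aux_add_pow_le (‖z i1‖ ^ 2) (‖z i0‖ ^ 2) (by positivity) (by positivity) p hp
    calc (2 : ℝ) ^ ((1 : ℤ) - (p : ℤ)) * (‖z i0‖ ^ 2 + ‖z i1‖ ^ 2) ^ p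
        = (2 : ℝ) ^ ((1 : ℤ) - (p : ℤ)) * (‖z i1‖ ^ 2 + ‖z i0‖ ^ 2) ^ p := by ring
      _ ≤ (‖z i1‖ ^ 2) ^ p + (‖z i0‖ ^ 2) ^ p := this
      _ = ‖z i1‖ ^ (2 * p) + ‖z i0‖ ^ (2 * p) := by rw [← pow_mul, ← pow_mul]
  · have h0 : ‖z i1‖ ^ (2 * p) ≤ ∏ i ∈ Finset.univ.erase i0, ‖z i‖ ^ 2 := by
      rw [pow_mul]
      calc (‖z i1‖ ^ 2) ^ p = ∏ _i ∈ Finset.univ.erase i0, ‖z i1‖ ^ 2 := by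
            rw [Finset.prod_const, card_erase]
        _ ≤ ∏ i ∈ Finset.univ.erase i0, ‖z i‖ ^ 2 := by
            apply Finset.prod_le_prod (fun i _ => by positivity)
            intro i hi
            have hne : (i : ℕ) ≠ 0 := fun h =>
              Finset.ne_of_mem_erase hi (by simp [i0, Fin.ext_iff, h])
            have : i1 ≤ i := by simp only [i1, Fin.le_def]; omega
            exact pow_le_pow_left₀ (norm_nonneg _) (hmono _ _ this) 2
    have h1 : ‖z i0‖ ^ (2 * p) ≤ ∏ i ∈ Finset.univ.erase i1, ‖z i‖ ^ 2 := by
      rw [pow_mul]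
      calc (‖z i0‖ ^ 2) ^ p = ∏ _i ∈ Finset.univ.erase i1, ‖z i0‖ ^ 2 := by
            rw [Finset.prod_const, card_erase]
        _ ≤ ∏ i ∈ Finset.univ.erase i1, ‖z i‖ ^ 2 := by
            apply Finset.prod_le_prod (fun i _ => by positivity)
            intro i _
            exact pow_le_pow_left₀ (norm_nonneg _)
              (hmono _ _ (by simp [i0, Fin.le_def])) 2
    calc ‖z i1‖ ^ (2 * p) + ‖z i0‖ ^ (2 * p)
        ≤ (∏ i ∈ Finset.univ.erase i0, ‖z i‖ ^ 2) +
          ∏ i ∈ Finset.univ.erase i1, ‖z i‖ ^ 2 := add_le_add h0 h1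
      _ = ∑ j ∈ ({i0, i1} : Finset (Fin (p + 1))),
            ∏ i ∈ Finset.univ.erase j, ‖z i‖ ^ 2 := by
          rw [Finset.sum_pair h01]
      _ ≤ ∑ j : Fin (p + 1), ∏ i ∈ Finset.univ.erase j, ‖z i‖ ^ 2 := by
          apply Finset.sum_le_sum_of_subset_of_nonneg (Finset.subset_univ _)
          intro j _ _
          exact Finset.prod_nonneg fun i _ => by positivity
end

section
/- Let π(z₀,…,z_n) = z₀ z₁ ⋯ z_p on the polydisc {z ∈ ℂ^{n+1} : |z_i| < 1} with 1 ≤ p ≤ n. Then there is a constant c > 0 (one may take c = 2^{1−p} c₀^p where c₀ relates Euclidean distance to the set {∃ i≠j ≤ p, z_i = z_j = 0}) such that ‖dπ(z)‖² ≥ c · d(z, S)^{2p} for all z in the polydisc, where S = {z : z_i = z_j = 0 for some 0 ≤ i < j ≤ p}, d is the Euclidean distance, and ‖dπ(z)‖² = ∑_{j=0}^{p} |∏_{i ≠ j, 0 ≤ i ≤ p} z_i|². -/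
lemma dist_update_aux {m : ℕ} (x : EuclideanSpace ℂ (Fin m)) (k : Fin m) (a : ℂ) :
    dist x (WithLp.toLp 2 (Function.update x k a)) = dist (x k) a := by
  rw [EuclideanSpace.dist_eq]
  rw [Finset.sum_eq_single k]
  · simp only [WithLp.ofLp_toLp, Function.update_self]; rw [ Real.sqrt_sq dist_nonneg]
  · intro i _ hi
    simp only [WithLp.ofLp_toLp, Function.update_of_ne hi]
    simp
  · simp

/-- Łojasiewicz-type estimate for the monomial map `π(z) = z₀⋯z_p` on the unit polydisc
in `ℂ^{n+1}` (with `1 ≤ p ≤ n`): there is `c > 0` such that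
`‖dπ(z)‖² = ∑_{j ≤ p} |∏_{i ≤ p, i ≠ j} z_i|² ≥ c · d(z, S)^{2p}`, where
`S = {z : z_i = z_j = 0 for some 0 ≤ i < j ≤ p}` and `d` is the Euclidean distance. -/
theorem stmt_4 (n p : ℕ) (hp : 1 ≤ p) (hpn : p ≤ n) :
    ∃ c : ℝ, 0 < c ∧
      ∀ z : EuclideanSpace ℂ (Fin (n + 1)), (∀ i, ‖z i‖ < 1) →
        c * Metric.infDist z
            {w : EuclideanSpace ℂ (Fin (n + 1)) |
              ∃ i j : Fin (n + 1), i.val < j.val ∧ j.val ≤ p ∧ w i = 0 ∧ w j = 0}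
            ^ (2 * p)
          ≤ ∑ j ∈ Finset.univ.filter (fun j : Fin (n + 1) => j.val ≤ p),
              ‖∏ i ∈ Finset.univ.filter (fun i : Fin (n + 1) => i.val ≤ p ∧ i ≠ j),
                  z i‖ ^ 2 := by
  refine ⟨(1/4)^p, by positivity, ?_⟩
  intro z hz
  set S : Set (EuclideanSpace ℂ (Fin (n + 1))) :=
    {w : EuclideanSpace ℂ (Fin (n + 1)) |
      ∃ i j : Fin (n + 1), i.val < j.val ∧ j.val ≤ p ∧ w i = 0 ∧ w j = 0} with hS
  set T : Finset (Fin (n+1)) := Finset.univ.filter (fun j : Fin (n + 1) => j.val ≤ p) with hT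
  -- card of T
  have hTcard : T.card = p + 1 := by
    have : T = Finset.map ⟨Fin.castLE (Nat.succ_le_succ hpn), Fin.castLE_injective _⟩
        Finset.univ := by
      ext i
      simp only [hT, Finset.mem_filter, Finset.mem_univ, true_and, Finset.mem_map,
        Function.Embedding.coeFn_mk]
      constructor
      · intro hi
        exact ⟨⟨i.val, Nat.lt_succ_of_le hi⟩, by ext; simp [Fin.castLE]⟩
      · rintro ⟨a, rfl⟩
        simpa [Fin.castLE] using Nat.lt_succ_iff.mp a.isLt
    rw [this, Finset.card_map, Finset.card_univ, Fintype.card_fin]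
  have hTne : T.Nonempty := Finset.card_pos.mp (by omega)
  obtain ⟨j₀, hj₀T, hj₀min⟩ := Finset.exists_min_image T (fun i => ‖z i‖) hTne
  have hTe : (T.erase j₀).Nonempty := by
    apply Finset.card_pos.mp
    rw [Finset.card_erase_of_mem hj₀T, hTcard]
    omega
  obtain ⟨j₁, hj₁T, hj₁min⟩ := Finset.exists_min_image (T.erase j₀) (fun i => ‖z i‖) hTe
  have hj₁ne : j₁ ≠ j₀ := (Finset.mem_erase.mp hj₁T).1
  have hj₁T' : j₁ ∈ T := (Finset.mem_erase.mp hj₁T).2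
  have h01 : ‖z j₀‖ ≤ ‖z j₁‖ := hj₀min j₁ hj₁T'
  -- the point w ∈ S
  set w' : EuclideanSpace ℂ (Fin (n+1)) := WithLp.toLp 2 (Function.update z j₀ 0) with hw'
  set w : EuclideanSpace ℂ (Fin (n+1)) := WithLp.toLp 2 (Function.update w' j₁ 0) with hw
  have hwj₀ : w j₀ = 0 := by
    rw [hw, WithLp.ofLp_toLp, Function.update_of_ne (Ne.symm hj₁ne), hw', WithLp.ofLp_toLp, Function.update_self]
  have hwj₁ : w j₁ = 0 := by rw [hw, WithLp.ofLp_toLp, Function.update_self]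
  have hj₀p : j₀.val ≤ p := by simpa [hT] using hj₀T
  have hj₁p : j₁.val ≤ p := by simpa [hT] using hj₁T'
  have hwS : w ∈ S := by
    rcases lt_or_gt_of_ne (fun h : j₀.val = j₁.val => hj₁ne (Fin.ext h.symm)) with h | h
    · exact ⟨j₀, j₁, h, hj₁p, hwj₀, hwj₁⟩
    · exact ⟨j₁, j₀, h, hj₀p, hwj₁, hwj₀⟩
  -- distance bound
  have hdist : Metric.infDist z S ≤ 2 * ‖z j₁‖ := by
    calc Metric.infDist z S ≤ dist z w := Metric.infDist_le_dist_of_mem hwS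
    _ ≤ dist z w' + dist w' w := dist_triangle _ _ _
    _ = ‖z j₀‖ + ‖z j₁‖ := by
        rw [hw, hw', dist_update_aux, dist_update_aux, dist_zero_right, dist_zero_right]
        simp only [WithLp.ofLp_toLp, Function.update_of_ne hj₁ne]
    _ ≤ 2 * ‖z j₁‖ := by linarith
  have hd0 : 0 ≤ Metric.infDist z S := Metric.infDist_nonneg
  -- lower bound on RHS
  have hset : Finset.univ.filter (fun i : Fin (n + 1) => i.val ≤ p ∧ i ≠ j₀) = T.erase j₀ := by
    ext i
    simp only [Finset.mem_filter, Finset.mem_univ, true_and, Finset.mem_erase, hT]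
    tauto
  have hcard' : (T.erase j₀).card = p := by
    rw [Finset.card_erase_of_mem hj₀T, hTcard]; omega
  have hprod : ‖z j₁‖ ^ p ≤ ∏ i ∈ T.erase j₀, ‖z i‖ := by
    calc ‖z j₁‖ ^ p = ∏ _i ∈ T.erase j₀, ‖z j₁‖ := by
          rw [Finset.prod_const, hcard']
    _ ≤ ∏ i ∈ T.erase j₀, ‖z i‖ :=
        Finset.prod_le_prod (fun i _ => norm_nonneg _) (fun i hi => hj₁min i hi)
  have hterm : (‖z j₁‖ ^ p) ^ 2 ≤
      ∑ j ∈ T, ‖∏ i ∈ Finset.univ.filter (fun i : Fin (n + 1) => i.val ≤ p ∧ i ≠ j), z i‖ ^ 2 := by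
    have h1 : (‖z j₁‖ ^ p) ^ 2 ≤
        ‖∏ i ∈ Finset.univ.filter (fun i : Fin (n + 1) => i.val ≤ p ∧ i ≠ j₀), z i‖ ^ 2 := by
      rw [hset, norm_prod]
      exact pow_le_pow_left₀ (by positivity) hprod 2
    exact h1.trans (Finset.single_le_sum
      (f := fun j => ‖∏ i ∈ Finset.univ.filter (fun i : Fin (n + 1) => i.val ≤ p ∧ i ≠ j), z i‖ ^ 2)
      (fun j _ => by positivity) hj₀T)
  calc (1/4:ℝ)^p * Metric.infDist z S ^ (2 * p)
      = (Metric.infDist z S / 2) ^ (2 * p) := by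
        rw [pow_mul, pow_mul, div_pow]
        ring_nf
        rw [one_div, mul_comm]
    _ ≤ ‖z j₁‖ ^ (2 * p) := by
        apply pow_le_pow_left₀ (by positivity)
        linarith
    _ = (‖z j₁‖ ^ p) ^ 2 := by rw [← pow_mul, Nat.mul_comm]
    _ ≤ _ := hterm
end
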